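/- 3F2 reduction with repeated parameter (Greene): for multiplicative characters A, B, C, D of F_q and x ∈ F_q, 3F2(A, B, C; D, B | x) = (C·D̄ choose B·D̄)·2F1(A, C; D | x) - B(-1)D(-1)·B̄(x)·(A·B̄ choose B̄) + (q-1)·B(-1)D(-1)·δ(C·D̄)·ε(x)·Ā(1-x), where δ(C·D̄) = 1 iff C = D. -/

import Mathlib

open scoped BigOperators Classical

noncomputable section

variable {F : Type*} [Field F] [Fintype F]

instance : Fintype (MulChar F ℂ) := Fintype.ofFinite _

/-- Jacobi-type sum `J(χ,λ) = Σ_u χ(u) λ(1-u)`. -/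
def Jsum (A B : MulChar F ℂ) : ℂ := ∑ u : F, A u * B (1 - u)

/-- Finite field binomial coefficient `(A choose B) = B(-1) J(A, B⁻¹)`. -/
def binom (A B : MulChar F ℂ) : ℂ := B (-1) * Jsum A B⁻¹

/-- Finite field Gauss hypergeometric `₂F₁(A,B;C|x)` (normalized as in the paper). -/
def H2F1 (A B C : MulChar F ℂ) (x : F) : ℂ :=
  (1 : MulChar F ℂ) x * (B * C) (-1) *
    ∑ y : F, B y * (B⁻¹ * C) (1 - y) * A⁻¹ (1 - x * y)

/-- Finite field `₃F₂`. -/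
def H3F2 (A0 A1 A2 B1 B2 : MulChar F ℂ) (x : F) : ℂ :=
  (1 / ((Fintype.card F : ℂ) - 1)) *
    ∑ χ : MulChar F ℂ, binom (A0 * χ) χ * binom (A1 * χ) (B1 * χ) *
      binom (A2 * χ) (B2 * χ) * χ x

/-- Finite field Appell series `F₃`. -/
def AF3 (A A' B B' C : MulChar F ℂ) (x y : F) : ℂ :=
  (1 : MulChar F ℂ) (x * y) * B (-1) * B' (-1) *
    ∑ u : F, ∑ v : F, B u * B' v * (C * B⁻¹ * B'⁻¹) (1 - u - v) *
      A⁻¹ (1 - u * x) * A'⁻¹ (1 - v * y)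

set_option linter.unusedSectionVars false
set_option linter.unusedVariables false
set_option maxHeartbeats 1000000

instance : HasEnoughRootsOfUnity ℂ (Monoid.exponent Fˣ) := by
  haveI : NeZero ((Monoid.exponent Fˣ : ℕ) : ℂ) :=
    ⟨by exact_mod_cast Monoid.exponent_ne_zero_of_finite⟩
  infer_instance

lemma mc_zero (χ : MulChar F ℂ) : χ 0 = 0 := χ.map_zero

lemma mc_inv (χ : MulChar F ℂ) (a : F) : χ⁻¹ a = χ a⁻¹ := MulChar.inv_apply' χ a

lemma mc_map_inv (χ : MulChar F ℂ) (a : F) : χ a⁻¹ = (χ a)⁻¹ := by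
  rw [← MulChar.inv_apply', MulChar.inv_apply_eq_inv']

lemma mc_cancel (χ : MulChar F ℂ) {a : F} (ha : a ≠ 0) : χ a * χ⁻¹ a = 1 := by
  rw [← MulChar.mul_apply, mul_inv_cancel]
  exact MulChar.one_apply (isUnit_iff_ne_zero.mpr ha)

lemma mc_ne_zero (χ : MulChar F ℂ) {a : F} (ha : a ≠ 0) : χ a ≠ 0 :=
  left_ne_zero_of_mul_eq_one (mc_cancel χ ha)

lemma sum_chars (t : F) :
    ∑ χ : MulChar F ℂ, χ t = if t = 1 then ((Fintype.card F : ℂ) - 1) else 0 := by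
  split_ifs with ht
  · subst ht
    simp only [map_one, Finset.sum_const, Finset.card_univ, nsmul_eq_mul, mul_one]
    have h1 : Nat.card (MulChar F ℂ) = Nat.card Fˣ :=
      MulChar.card_eq_card_units_of_hasEnoughRootsOfUnity F ℂ
    rw [← Nat.card_eq_fintype_card, h1, Nat.card_eq_fintype_card, Fintype.card_units,
      Nat.cast_sub Fintype.card_pos, Nat.cast_one]
  · by_cases hu : IsUnit t
    · obtain ⟨χ₀, hχ₀⟩ := MulChar.exists_apply_ne_one_of_hasEnoughRootsOfUnity F ℂ ht
      refine eq_zero_of_mul_eq_self_left hχ₀ ?_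
      simp only [Finset.mul_sum, ← MulChar.mul_apply]
      exact Fintype.sum_bijective _ (Group.mulLeft_bijective χ₀) _ _ fun χ' ↦ rfl
    · exact Finset.sum_eq_zero fun χ _ ↦ χ.map_nonunit hu

lemma chi_combine (χ : MulChar F ℂ) (x u v w : F) :
    (χ (-1) * (χ u * χ⁻¹ (1-u))) * ((χ (-1)) * (χ v * χ⁻¹ (1-v))) *
      ((χ (-1)) * (χ w * χ⁻¹ (1-w))) * χ x
    = χ (-(x*u*v*w) * ((1-u)⁻¹ * (1-v)⁻¹ * (1-w)⁻¹)) := by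
  simp only [mc_inv, ← map_mul]
  congr 1
  ring

lemma step_A (A B C D : MulChar F ℂ) (x : F) :
    H3F2 A B C D B x = B (-1) * D (-1) *
      ∑ u : F, ∑ v : F, ∑ w : F,
        (if -(x*w*v*u) * ((1-w)⁻¹ * (1-v)⁻¹ * (1-u)⁻¹) = 1
         then A w * B v * D⁻¹ (1-v) * C u * B⁻¹ (1-u) else 0) := by
  have hterm : ∀ χ : MulChar F ℂ,
      binom (A * χ) χ * binom (B * χ) (D * χ) * binom (C * χ) (B * χ) * χ x
      = ∑ u : F, ∑ v : F, ∑ w : F,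
          (B (-1) * D (-1) * (A w * B v * D⁻¹ (1-v) * C u * B⁻¹ (1-u))) *
            χ (-(x*w*v*u) * ((1-w)⁻¹ * (1-v)⁻¹ * (1-u)⁻¹)) := by
    intro χ
    simp only [binom, Jsum, mul_inv, MulChar.mul_apply, Finset.sum_mul, Finset.mul_sum]
    refine Finset.sum_congr rfl fun u _ => ?_
    refine Finset.sum_congr rfl fun v _ => ?_
    refine Finset.sum_congr rfl fun w _ => ?_
    rw [← chi_combine χ x w v u]
    ring
  have hq : ((Fintype.card F : ℂ) - 1) ≠ 0 := by
    have h1 : (Fintype.card F : ℂ) ≠ 1 := by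
      rw [ne_eq, Nat.cast_eq_one]
      exact Fintype.one_lt_card.ne'
    exact sub_ne_zero.mpr h1
  rw [H3F2]
  rw [Finset.sum_congr rfl fun χ _ => hterm χ]
  rw [Finset.sum_comm]
  have hswap : ∀ u : F, (∑ χ : MulChar F ℂ, ∑ v : F, ∑ w : F,
      (B (-1) * D (-1) * (A w * B v * D⁻¹ (1-v) * C u * B⁻¹ (1-u))) *
        χ (-(x*w*v*u) * ((1-w)⁻¹ * (1-v)⁻¹ * (1-u)⁻¹)))
      = ((Fintype.card F : ℂ) - 1) * (B (-1) * D (-1) *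
          ∑ v : F, ∑ w : F, (if -(x*w*v*u) * ((1-w)⁻¹ * (1-v)⁻¹ * (1-u)⁻¹) = 1
            then A w * B v * D⁻¹ (1-v) * C u * B⁻¹ (1-u) else 0)) := by
    intro u
    rw [Finset.sum_comm]
    simp only [Finset.mul_sum]
    refine Finset.sum_congr rfl fun v _ => ?_
    rw [Finset.sum_comm]
    refine Finset.sum_congr rfl fun w _ => ?_
    rw [← Finset.mul_sum, sum_chars]
    split_ifs with h
    · ring
    · ring
  rw [Finset.sum_congr rfl fun u _ => hswap u]
  rw [← Finset.mul_sum, ← Finset.mul_sum]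
  rw [← mul_assoc, one_div, inv_mul_cancel₀ hq, one_mul]

lemma cond_iff {x : F} (hx : x ≠ 0) (u v w : F) :
    (-(x*w*v*u) * ((1-w)⁻¹ * (1-v)⁻¹ * (1-u)⁻¹) = 1) ↔
    ((w ≠ 0 ∧ w ≠ 1 ∧ u ≠ 0 ∧ u ≠ 1 ∧ (1-w)*(1-u) - x*w*u ≠ 0) ∧
      v = (1-w)*(1-u) * ((1-w)*(1-u) - x*w*u)⁻¹) := by
  constructor
  · intro h
    have hne : -(x*w*v*u) * ((1-w)⁻¹ * (1-v)⁻¹ * (1-u)⁻¹) ≠ 0 := by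
      rw [h]; exact one_ne_zero
    have hw0 : w ≠ 0 := by intro h0; apply hne; rw [h0]; ring
    have hv0 : v ≠ 0 := by intro h0; apply hne; rw [h0]; ring
    have hu0 : u ≠ 0 := by intro h0; apply hne; rw [h0]; ring
    have h1w : (1:F) - w ≠ 0 := by
      intro h0; apply hne; rw [h0, inv_zero]; ring
    have h1v : (1:F) - v ≠ 0 := by
      intro h0; apply hne; rw [h0, inv_zero]; ring
    have h1u : (1:F) - u ≠ 0 := by
      intro h0; apply hne; rw [h0, inv_zero]; ring
    have hw1 : w ≠ 1 := fun h0 => h1w (by rw [h0, sub_self])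
    have hu1 : u ≠ 1 := fun h0 => h1u (by rw [h0, sub_self])
    have heq : -(x*w*v*u) = (1-w)*(1-v)*(1-u) := by
      field_simp at h
      linear_combination h
    have hd : (1-w)*(1-u) - x*w*u ≠ 0 := by
      intro h0
      have hz : x*w*u = 0 := by linear_combination (-1)*heq - (1-v)*h0
      exact (mul_ne_zero (mul_ne_zero hx hw0) hu0) hz
    refine ⟨⟨hw0, hw1, hu0, hu1, hd⟩, ?_⟩
    have hvd : v * ((1-w)*(1-u) - x*w*u) = (1-w)*(1-u) := by linear_combination heq
    rw [← div_eq_mul_inv, eq_div_iff hd]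
    exact hvd
  · rintro ⟨⟨hw0, hw1, hu0, hu1, hd⟩, rfl⟩
    have h1w : (1:F) - w ≠ 0 := sub_ne_zero.mpr (Ne.symm hw1)
    have h1u : (1:F) - u ≠ 0 := sub_ne_zero.mpr (Ne.symm hu1)
    have e2 : (1:F) - (1-w)*(1-u) * ((1-w)*(1-u) - x*w*u)⁻¹
        = -(x*w*u) * ((1-w)*(1-u) - x*w*u)⁻¹ := by
      linear_combination (-1 : F) * mul_inv_cancel₀ hd
    have hxwu : -(x*w*u) ≠ 0 := by
      simp only [neg_ne_zero]
      exact mul_ne_zero (mul_ne_zero hx hw0) hu0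
    rw [e2, mul_inv, inv_inv]
    have key : -(x*w*((1-w)*(1-u) * ((1-w)*(1-u) - x*w*u)⁻¹)*u) *
        ((1-w)⁻¹ * ((-(x*w*u))⁻¹ * ((1-w)*(1-u) - x*w*u)) * (1-u)⁻¹)
        = ((1-w) * (1-w)⁻¹) * (((1-u) * (1-u)⁻¹) *
            ((((1-w)*(1-u) - x*w*u) * ((1-w)*(1-u) - x*w*u)⁻¹) *
              (-(x*w*u) * (-(x*w*u))⁻¹))) := by ring
    rw [key, mul_inv_cancel₀ h1w, mul_inv_cancel₀ h1u, mul_inv_cancel₀ hd,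
      mul_inv_cancel₀ hxwu]
    norm_num

lemma vsum_eval (A B C D : MulChar F ℂ) {x : F} (hx : x ≠ 0) (u w : F) :
    (∑ v : F, if -(x*w*v*u) * ((1-w)⁻¹ * (1-v)⁻¹ * (1-u)⁻¹) = 1
        then A w * B v * D⁻¹ (1-v) * C u * B⁻¹ (1-u) else 0)
    = if u = 1 then 0 else
        D⁻¹ (-x) * ((A * D⁻¹) w * B (1-w) *
          ((C * D⁻¹) u * (B⁻¹ * D) ((1-w)*(1-u) - x*w*u))) := by
  simp only [cond_iff hx]
  by_cases hP : w ≠ 0 ∧ w ≠ 1 ∧ u ≠ 0 ∧ u ≠ 1 ∧ (1-w)*(1-u) - x*w*u ≠ 0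
  · obtain ⟨hw0, hw1, hu0, hu1, hd⟩ := hP
    have hPP : w ≠ 0 ∧ w ≠ 1 ∧ u ≠ 0 ∧ u ≠ 1 ∧ (1-w)*(1-u) - x*w*u ≠ 0 :=
      ⟨hw0, hw1, hu0, hu1, hd⟩
    rw [if_neg hu1]
    have hcongr : ∀ v : F, (if (w ≠ 0 ∧ w ≠ 1 ∧ u ≠ 0 ∧ u ≠ 1 ∧
        (1-w)*(1-u) - x*w*u ≠ 0) ∧ v = (1-w)*(1-u) * ((1-w)*(1-u) - x*w*u)⁻¹
        then A w * B v * D⁻¹ (1-v) * C u * B⁻¹ (1-u) else 0)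
        = if v = (1-w)*(1-u) * ((1-w)*(1-u) - x*w*u)⁻¹
          then A w * B v * D⁻¹ (1-v) * C u * B⁻¹ (1-u) else 0 := by
      intro v
      by_cases hv : v = (1-w)*(1-u) * ((1-w)*(1-u) - x*w*u)⁻¹
      · rw [if_pos ⟨hPP, hv⟩, if_pos hv]
      · rw [if_neg (fun hc => hv hc.2), if_neg hv]
    rw [Finset.sum_congr rfl fun v _ => hcongr v]
    rw [Finset.sum_ite_eq' Finset.univ ((1-w)*(1-u) * ((1-w)*(1-u) - x*w*u)⁻¹)
      (fun v => A w * B v * D⁻¹ (1-v) * C u * B⁻¹ (1-u)), if_pos (Finset.mem_univ _)]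
    have h1w : (1:F) - w ≠ 0 := sub_ne_zero.mpr (Ne.symm hw1)
    have h1u : (1:F) - u ≠ 0 := sub_ne_zero.mpr (Ne.symm hu1)
    have e2 : (1:F) - (1-w)*(1-u) * ((1-w)*(1-u) - x*w*u)⁻¹
        = -x * w * u * ((1-w)*(1-u) - x*w*u)⁻¹ := by
      linear_combination (-1 : F) * mul_inv_cancel₀ hd
    rw [e2]
    have e1 : B ((1-w)*(1-u) * ((1-w)*(1-u) - x*w*u)⁻¹)
        = B (1-w) * B (1-u) * (B ((1-w)*(1-u) - x*w*u))⁻¹ := by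
      rw [map_mul, map_mul, mc_map_inv]
    have e3 : D⁻¹ (-x * w * u * ((1-w)*(1-u) - x*w*u)⁻¹)
        = D⁻¹ (-x) * D⁻¹ w * D⁻¹ u * (D⁻¹ ((1-w)*(1-u) - x*w*u))⁻¹ := by
      rw [map_mul, map_mul, map_mul, mc_map_inv]
    rw [e1, e3]
    simp only [MulChar.mul_apply, MulChar.inv_apply_eq_inv']
    have hB1u := mc_ne_zero B h1u
    simp only [inv_inv]
    linear_combination (D (-x))⁻¹ * (A w * (D w)⁻¹ * B (1-w) *
      (C u * (D u)⁻¹ * ((B ((1-w)*(1-u) - x*w*u))⁻¹ * D ((1-w)*(1-u) - x*w*u)))) *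
      (mul_inv_cancel₀ hB1u)
  · have hsum : (∑ v : F, if (w ≠ 0 ∧ w ≠ 1 ∧ u ≠ 0 ∧ u ≠ 1 ∧
        (1-w)*(1-u) - x*w*u ≠ 0) ∧ v = (1-w)*(1-u) * ((1-w)*(1-u) - x*w*u)⁻¹
        then A w * B v * D⁻¹ (1-v) * C u * B⁻¹ (1-u) else 0) = 0 := by
      refine Finset.sum_eq_zero fun v _ => ?_
      rw [if_neg]
      intro hcon
      exact hP hcon.1
    rw [hsum]
    by_cases hu1 : u = 1
    · rw [if_pos hu1]
    · rw [if_neg hu1]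
      push_neg at hP
      by_cases hw0 : w = 0
      · subst hw0
        simp [MulChar.mul_apply, mc_zero]
      by_cases hw1 : w = 1
      · subst hw1
        simp [mc_zero]
      by_cases hu0 : u = 0
      · subst hu0
        simp [MulChar.mul_apply, mc_zero]
      have hd := hP hw0 hw1 hu0 hu1
      simp [hd, MulChar.mul_apply, mc_zero]

lemma lin_sub (χ ψ : MulChar F ℂ) {a b : F} (ha : a ≠ 0) (hb : b ≠ 0) :
    ∑ w : F, χ w * ψ (a - b*w) = χ (a * b⁻¹) * ψ a * Jsum χ ψ := by
  rw [Jsum, Finset.mul_sum]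
  refine Fintype.sum_equiv (Equiv.mulLeft₀ (b * a⁻¹)
    (mul_ne_zero hb (inv_ne_zero ha))) _ _ fun t => ?_
  simp only [Equiv.mulLeft₀_apply]
  rw [show (1:F) - b * a⁻¹ * t = a⁻¹ * (a - b * t) by field_simp]
  simp only [map_mul, mc_map_inv]
  linear_combination
    (-(χ t * ψ (a - b*t) * ψ a * χ b * (ψ a)⁻¹ * (χ b)⁻¹)) *
      mul_inv_cancel₀ (mc_ne_zero χ ha)
    + (-(χ t * ψ (a - b*t) * χ b * (χ b)⁻¹)) * mul_inv_cancel₀ (mc_ne_zero ψ ha)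
    + (-(χ t * ψ (a - b*t))) * mul_inv_cancel₀ (mc_ne_zero χ hb)

lemma wsum_eval (A B C D : MulChar F ℂ) {x : F} (hx : x ≠ 0) (w : F) :
    ∑ u : F, (A*D⁻¹) w * B (1-w) * ((C*D⁻¹) u * (B⁻¹*D) ((1-w)*(1-u) - x*w*u))
    = Jsum (C*D⁻¹) (B⁻¹*D) * ((A*D⁻¹) w * C (1-w) * (C⁻¹*D) (1 - w + x*w))
      + (if 1 - w + x*w = 0 then (A*D⁻¹) w * D (1-w) *
          (if C*D⁻¹ = 1 then ((Fintype.card F : ℂ) - 1) else 0) else 0) := by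
  have harg : ∀ u : F, (1-w)*(1-u) - x*w*u = (1-w) - (1-w+x*w)*u := fun u => by ring
  simp only [harg]
  by_cases hb : 1 - w + x*w = 0
  · rw [if_pos hb, hb, mc_zero (C⁻¹*D)]
    simp only [zero_mul, sub_zero, mul_zero, zero_add]
    have h1w : (1:F) - w ≠ 0 := by
      intro h0
      apply hx
      have hw : w = 1 := by linear_combination -h0
      rw [hw] at hb
      linear_combination hb
    have hre : ∀ u : F, (A*D⁻¹) w * B (1-w) * ((C*D⁻¹) u * (B⁻¹*D) (1-w))
        = ((A*D⁻¹) w * B (1-w) * (B⁻¹*D) (1-w)) * (C*D⁻¹) u := fun u => by ring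
    rw [Finset.sum_congr rfl fun u _ => hre u, ← Finset.mul_sum]
    have hsum : ∑ u : F, (C*D⁻¹) u
        = (if C*D⁻¹ = 1 then ((Fintype.card F : ℂ) - 1) else 0) := by
      split_ifs with hCD
      · rw [hCD]
        classical
        rw [MulChar.sum_one_eq_card_units, Fintype.card_units,
          Nat.cast_sub Fintype.card_pos, Nat.cast_one]
      · exact MulChar.sum_eq_zero_of_ne_one hCD
    rw [hsum]
    simp only [MulChar.mul_apply, MulChar.inv_apply_eq_inv']
    linear_combination (A w * (D w)⁻¹ * D (1-w) *
      (if C*D⁻¹ = 1 then ((Fintype.card F : ℂ) - 1) else 0)) *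
      mul_inv_cancel₀ (mc_ne_zero B h1w)
  · rw [if_neg hb, add_zero]
    by_cases h1w : (1:F) - w = 0
    · rw [h1w, ← h1w]
      simp [mc_zero, MulChar.mul_apply, h1w]
    · have hre : ∀ u : F, (A*D⁻¹) w * B (1-w) * ((C*D⁻¹) u * (B⁻¹*D) ((1-w) - (1-w+x*w)*u))
          = ((A*D⁻¹) w * B (1-w)) * ((C*D⁻¹) u * (B⁻¹*D) ((1-w) - (1-w+x*w)*u)) :=
        fun u => by ring
      rw [Finset.sum_congr rfl fun u _ => hre u, ← Finset.mul_sum,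
        lin_sub (C*D⁻¹) (B⁻¹*D) h1w hb]
      have e1 : (C*D⁻¹) ((1-w) * (1-w+x*w)⁻¹)
          = C (1-w) * (D (1-w))⁻¹ * ((C (1-w+x*w))⁻¹ * D (1-w+x*w)) := by
        simp only [map_mul, MulChar.mul_apply, mc_map_inv, MulChar.inv_apply_eq_inv',
          inv_inv]
      rw [e1]
      simp only [MulChar.mul_apply, MulChar.inv_apply_eq_inv']
      linear_combination
        (A w * (D w)⁻¹ * C (1-w) * (C (1-w+x*w))⁻¹ * D (1-w+x*w) *
          Jsum (C*D⁻¹) (B⁻¹*D) * ((D (1-w))⁻¹ * D (1-w))) *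
          mul_inv_cancel₀ (mc_ne_zero B h1w)
        + (A w * (D w)⁻¹ * C (1-w) * (C (1-w+x*w))⁻¹ * D (1-w+x*w) *
            Jsum (C*D⁻¹) (B⁻¹*D)) *
          inv_mul_cancel₀ (mc_ne_zero D h1w)

lemma slice_sum (A D : MulChar F ℂ) {x : F} (hx : x ≠ 0) (κ : ℂ) :
    ∑ w : F, (if 1 - w + x*w = 0 then (A*D⁻¹) w * D (1-w) * κ else 0)
    = A⁻¹ (1-x) * D (-x) * κ := by
  by_cases hx1 : x = 1
  · subst hx1
    have hcond : ∀ w : F, ¬(1 - w + 1*w = 0) := by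
      intro w h
      rw [one_mul, sub_add_cancel] at h
      exact one_ne_zero h
    rw [Finset.sum_congr rfl fun w _ => if_neg (hcond w), Finset.sum_const_zero,
      show (1:F) - 1 = 0 from sub_self 1, mc_zero]
    ring
  · have h1x : (1:F) - x ≠ 0 := sub_ne_zero.mpr (fun h => hx1 h.symm)
    have hiff : ∀ w : F, (1 - w + x*w = 0) ↔ (w = (1-x)⁻¹) := by
      intro w
      constructor
      · intro h
        have hw : (1-x) * w = 1 := by linear_combination -h
        exact eq_inv_of_mul_eq_one_right hw
      · rintro rfl
        field_simp
        ring
    have hco : ∀ w : F, (if 1 - w + x*w = 0 then (A*D⁻¹) w * D (1-w) * κ else 0)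
        = (if w = (1-x)⁻¹ then (A*D⁻¹) w * D (1-w) * κ else 0) := by
      intro w
      by_cases h : w = (1-x)⁻¹
      · rw [if_pos ((hiff w).mpr h), if_pos h]
      · rw [if_neg (fun hc => h ((hiff w).mp hc)), if_neg h]
    rw [Finset.sum_congr rfl fun w _ => hco w,
      Finset.sum_ite_eq' Finset.univ ((1-x)⁻¹)
        (fun w => (A*D⁻¹) w * D (1-w) * κ), if_pos (Finset.mem_univ _)]
    rw [show (1:F) - (1-x)⁻¹ = -x * (1-x)⁻¹ by field_simp; ring]
    simp only [MulChar.mul_apply, map_mul, mc_map_inv, MulChar.inv_apply_eq_inv',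
      inv_inv]
    linear_combination ((A (1-x))⁻¹ * D (-x) * κ) * mul_inv_cancel₀ (mc_ne_zero D h1x)

lemma pfaff (A C D : MulChar F ℂ) {x : F} (hx : x ≠ 0) :
    ∑ w : F, (A*D⁻¹) w * C (1-w) * (C⁻¹*D) (1 - w + x*w)
    = C (-1) * D x * ∑ y : F, C y * (C⁻¹*D) (1-y) * A⁻¹ (1 - x*y) := by
  classical
  have hL : ∑ w ∈ Finset.univ.filter (fun w : F => w ≠ 0),
      (A*D⁻¹) w * C (1-w) * (C⁻¹*D) (1 - w + x*w)
      = ∑ w : F, (A*D⁻¹) w * C (1-w) * (C⁻¹*D) (1 - w + x*w) := by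
    refine Finset.sum_filter_of_ne fun w _ hfw => ?_
    intro h0
    subst h0
    exact hfw (by simp [mc_zero])
  have hR : ∑ y ∈ Finset.univ.filter (fun y : F => 1 - x*y ≠ 0),
      C y * (C⁻¹*D) (1-y) * A⁻¹ (1 - x*y)
      = ∑ y : F, C y * (C⁻¹*D) (1-y) * A⁻¹ (1 - x*y) := by
    refine Finset.sum_filter_of_ne fun y _ hfy => ?_
    intro h0
    exact hfy (by rw [h0, mc_zero]; ring)
  rw [← hL, ← hR, Finset.mul_sum]
  refine Finset.sum_nbij' (fun w => (w - 1) * (x*w)⁻¹) (fun y => (1 - x*y)⁻¹)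
    ?_ ?_ ?_ ?_ ?_
  · intro w hw
    rw [Finset.mem_filter] at hw ⊢
    refine ⟨Finset.mem_univ _, ?_⟩
    rw [show (1:F) - x*((w - 1) * (x*w)⁻¹) = w⁻¹ by field_simp [hw.2]; ring]
    exact inv_ne_zero hw.2
  · intro y hy
    rw [Finset.mem_filter] at hy ⊢
    exact ⟨Finset.mem_univ _, inv_ne_zero hy.2⟩
  · intro w hw
    rw [Finset.mem_filter] at hw
    show ((1:F) - x*((w - 1) * (x*w)⁻¹))⁻¹ = w
    rw [show (1:F) - x*((w - 1) * (x*w)⁻¹) = w⁻¹ by field_simp [hw.2]; ring, inv_inv]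
  · intro y hy
    rw [Finset.mem_filter] at hy
    have h1xy := hy.2
    show (((1:F) - x*y)⁻¹ - 1) * (x * ((1:F) - x*y)⁻¹)⁻¹ = y
    field_simp
    ring
  · intro w hw
    rw [Finset.mem_filter] at hw
    have hw0 := hw.2
    have e1 : (1:F) - x*((w - 1) * (x*w)⁻¹) = w⁻¹ := by field_simp [hw0]; ring
    have e2 : (1:F) - (w - 1) * (x*w)⁻¹ = (1 - w + x*w) * (x*w)⁻¹ := by
      field_simp [hw0]
      ring
    rw [e1, e2]
    have e3 : C (1-w) = C (-1) * C (w - 1) := by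
      rw [show (1:F) - w = -1 * (w - 1) by ring, map_mul]
    rw [e3]
    simp only [map_mul, MulChar.mul_apply, mc_map_inv, MulChar.inv_apply_eq_inv',
      inv_inv, mul_inv]
    have hCx := mc_ne_zero C hx
    have hCw := mc_ne_zero C hw0
    have hDx := mc_ne_zero D hx
    linear_combination
      (-(A w * C (-1) * C (w - 1) * D (1 - w + x*w) * (D w)⁻¹ * (C (1 - w + x*w))⁻¹ *
          (C x * (C x)⁻¹) * (C w * (C w)⁻¹))) * mul_inv_cancel₀ hDx
      + (-(A w * C (-1) * C (w - 1) * D (1 - w + x*w) * (D w)⁻¹ * (C (1 - w + x*w))⁻¹ *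
          (C w * (C w)⁻¹))) * mul_inv_cancel₀ hCx
      + (-(A w * C (-1) * C (w - 1) * D (1 - w + x*w) * (D w)⁻¹ * (C (1 - w + x*w))⁻¹)) *
          mul_inv_cancel₀ hCw

lemma fu1 (A B C D : MulChar F ℂ) {x : F} (hx : x ≠ 0) :
    ∑ w : F, (A*D⁻¹) w * B (1-w) * ((C*D⁻¹) 1 * (B⁻¹*D) ((1-w)*(1-(1:F)) - x*w*1))
    = (B⁻¹*D) (-x) * (B (-1) * binom (A*B⁻¹) B⁻¹) := by
  have harg : ∀ w : F, (1-w)*(1-(1:F)) - x*w*1 = -x * w := fun w => by ring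
  simp only [harg, map_one, one_mul]
  have hterm : ∀ w : F, (A*D⁻¹) w * B (1-w) * (B⁻¹*D) (-x * w)
      = (B⁻¹*D) (-x) * ((A*B⁻¹) w * B (1-w)) := by
    intro w
    by_cases hw : w = 0
    · subst hw
      simp [MulChar.mul_apply, mc_zero]
    · simp only [map_mul, MulChar.mul_apply, MulChar.inv_apply_eq_inv', mul_inv]
      linear_combination (A w * B (1-w) * (B (-x))⁻¹ * (B w)⁻¹ * D (-x)) *
        inv_mul_cancel₀ (mc_ne_zero D hw)
  rw [Finset.sum_congr rfl fun w _ => hterm w, ← Finset.mul_sum]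
  rw [binom, Jsum]
  congr 1
  rw [inv_inv]
  have hcan : B (-1) * B⁻¹ (-1) = 1 := mc_cancel B (neg_ne_zero.mpr one_ne_zero)
  rw [← mul_assoc, hcan, one_mul]

theorem H3F2_repeated (A B C D : MulChar F ℂ) (x : F) :
    H3F2 A B C D B x =
      binom (C * D⁻¹) (B * D⁻¹) * H2F1 A C D x -
      B (-1) * D (-1) * B⁻¹ x * binom (A * B⁻¹) B⁻¹ +
      ((Fintype.card F : ℂ) - 1) * B (-1) * D (-1) * (if C * D⁻¹ = 1 then 1 else 0) *
        (1 : MulChar F ℂ) x * A⁻¹ (1 - x) := by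
  by_cases hx : x = 0
  · subst hx
    rw [H3F2, H2F1]
    simp [mc_zero]
  · rw [step_A A B C D x]
    rw [Finset.sum_congr rfl fun u (_ : u ∈ Finset.univ) => Finset.sum_comm]
    rw [Finset.sum_congr rfl fun u (_ : u ∈ Finset.univ) =>
      Finset.sum_congr rfl fun w (_ : w ∈ Finset.univ) => vsum_eval A B C D hx u w]
    have hif : ∀ u : F, (∑ w : F, if u = 1 then (0:ℂ) else
        D⁻¹ (-x) * ((A * D⁻¹) w * B (1-w) *
          ((C * D⁻¹) u * (B⁻¹ * D) ((1-w)*(1-u) - x*w*u))))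
        = (∑ w : F, D⁻¹ (-x) * ((A * D⁻¹) w * B (1-w) *
            ((C * D⁻¹) u * (B⁻¹ * D) ((1-w)*(1-u) - x*w*u))))
          - (if u = 1 then ∑ w : F, D⁻¹ (-x) * ((A * D⁻¹) w * B (1-w) *
            ((C * D⁻¹) 1 * (B⁻¹ * D) ((1-w)*(1-(1:F)) - x*w*1))) else 0) := by
      intro u
      by_cases h : u = 1
      · subst h
        simp
      · simp [h]
    rw [Finset.sum_congr rfl fun u (_ : u ∈ Finset.univ) => hif u]
    rw [Finset.sum_sub_distrib]
    rw [Finset.sum_ite_eq' Finset.univ (1:F)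
      (fun _ => ∑ w : F, D⁻¹ (-x) * ((A * D⁻¹) w * B (1-w) *
        ((C * D⁻¹) 1 * (B⁻¹ * D) ((1-w)*(1-(1:F)) - x*w*1)))), if_pos (Finset.mem_univ _)]
    rw [show (∑ u : F, ∑ w : F, D⁻¹ (-x) * ((A * D⁻¹) w * B (1-w) *
        ((C * D⁻¹) u * (B⁻¹ * D) ((1-w)*(1-u) - x*w*u))))
        = D⁻¹ (-x) * ∑ u : F, ∑ w : F, ((A * D⁻¹) w * B (1-w) *
          ((C * D⁻¹) u * (B⁻¹ * D) ((1-w)*(1-u) - x*w*u))) from by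
      rw [Finset.mul_sum]
      exact Finset.sum_congr rfl fun u _ => by rw [Finset.mul_sum]]
    rw [show (∑ w : F, D⁻¹ (-x) * ((A * D⁻¹) w * B (1-w) *
        ((C * D⁻¹) 1 * (B⁻¹ * D) ((1-w)*(1-(1:F)) - x*w*1))))
        = D⁻¹ (-x) * ∑ w : F, ((A * D⁻¹) w * B (1-w) *
          ((C * D⁻¹) 1 * (B⁻¹ * D) ((1-w)*(1-(1:F)) - x*w*1))) from (Finset.mul_sum _ _ _).symm]
    rw [Finset.sum_comm]
    rw [Finset.sum_congr rfl fun w (_ : w ∈ Finset.univ) => wsum_eval A B C D hx w]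
    rw [Finset.sum_add_distrib]
    rw [show (∑ w : F, Jsum (C*D⁻¹) (B⁻¹*D) *
        ((A*D⁻¹) w * C (1-w) * (C⁻¹*D) (1 - w + x*w)))
        = Jsum (C*D⁻¹) (B⁻¹*D) * ∑ w : F,
          ((A*D⁻¹) w * C (1-w) * (C⁻¹*D) (1 - w + x*w)) from (Finset.mul_sum _ _ _).symm]
    rw [pfaff A C D hx, slice_sum A D hx _, fu1 A B C D hx]
    rw [H2F1, MulChar.one_apply (isUnit_iff_ne_zero.mpr hx), one_mul]
    rw [show binom (C * D⁻¹) (B * D⁻¹)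
        = (B * D⁻¹) (-1) * Jsum (C * D⁻¹) (B⁻¹ * D) from by rw [binom, mul_inv, inv_inv]]
    rw [binom, inv_inv]
    rw [show (-x : F) = -1 * x from by ring]
    simp only [map_mul, MulChar.mul_apply, MulChar.inv_apply_eq_inv', inv_inv, mul_inv]
    have hB1 : B (-1) ≠ 0 := mc_ne_zero B (neg_ne_zero.mpr one_ne_zero)
    have hD1 : D (-1) ≠ 0 := mc_ne_zero D (neg_ne_zero.mpr one_ne_zero)
    have hBx : B x ≠ 0 := mc_ne_zero B hx
    have hDx : D x ≠ 0 := mc_ne_zero D hx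
    have hs : ∑ y : F, C y * D (1 - y) / (C (1 - y) * A (1 - y * x))
        = ∑ y : F, C y * D (1 - y) / (C (1 - y) * A (1 - x * y)) :=
      Finset.sum_congr rfl fun y _ => by rw [mul_comm y x]
    split_ifs with hCD
    · field_simp
      rw [hs]; ring
    · field_simp
      rw [hs]; ring
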